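/- Suppose {α_k}_{k∈ℤ} is a sequence of m×m complex matrices such that for every k, α_{k+1}* α_k = α_k α_{k+1}* = c I for a fixed nonzero complex number c, and α_k* α_k + α_{k+1}* α_{k+1} = 2|c| I for all k. Writing c = -e^{-iφ} a² with a = |c|^{1/2} > 0, one has α_{k+1} = -e^{iφ} α_k for all k. -/

import Mathlib

open Matrix

/-- Let `{α_k}_{k ∈ ℤ}` be `m × m` complex matrices with
`α_{k+1}* α_k = α_k α_{k+1}* = c I` for a fixed `c ≠ 0`, written as `c = -e^{-iφ} a²`
with `a = |c|^{1/2} > 0`, and `α_k* α_k + α_{k+1}* α_{k+1} = 2|c| I` for all `k`.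
Then `α_{k+1} = -e^{iφ} α_k` for all `k`. -/
theorem stmt_13 (m : ℕ) (α : ℤ → Matrix (Fin m) (Fin m) ℂ)
    (c : ℂ) (hc : c ≠ 0) (a φ : ℝ) (ha : 0 < a)
    (hca : c = -Complex.exp (-(φ * Complex.I)) * (a : ℂ) ^ 2)
    (h1 : ∀ k : ℤ, (α (k + 1))ᴴ * α k = c • 1 ∧ α k * (α (k + 1))ᴴ = c • 1)
    (h2 : ∀ k : ℤ, (α k)ᴴ * α k + (α (k + 1))ᴴ * α (k + 1) =
      ((2 * ‖c‖ : ℝ) : ℂ) • 1) :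
    ∀ k : ℤ, α (k + 1) = -Complex.exp (φ * Complex.I) • α k := by
  intro k
  set e : ℂ := Complex.exp (φ * Complex.I) with he
  have hee : e * Complex.exp (-(φ * Complex.I)) = 1 := by
    rw [he, ← Complex.exp_add]; simp
  have habs : ((‖c‖ : ℝ) : ℂ) = (a : ℂ) ^ 2 := by
    have : ‖c‖ = a ^ 2 := by
      rw [hca]
      simp [_root_.map_mul, Complex.norm_exp, abs_of_pos ha, sq_abs]
    rw [this]; push_cast; ring
  have hec : e * c = -(a : ℂ) ^ 2 := by
    rw [hca]; rw [show e * (-Complex.exp (-(φ * Complex.I)) * (a:ℂ)^2)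
      = -((e * Complex.exp (-(φ * Complex.I))) * (a:ℂ)^2) by ring, hee]; ring
  have hcec : (starRingEnd ℂ) e * (starRingEnd ℂ) c = -(a : ℂ) ^ 2 := by
    rw [← _root_.map_mul, hec]
    simp [map_neg, map_pow, Complex.conj_ofReal]
  have hce : (starRingEnd ℂ) e * e = 1 := by
    rw [he]
    rw [← Complex.exp_conj, ← Complex.exp_add]
    simp [Complex.conj_ofReal]
  have h3 := (h1 k).1
  have h4 : (α k)ᴴ * α (k + 1) = (starRingEnd ℂ c) • 1 := by
    have := congrArg conjTranspose h3
    simpa [conjTranspose_mul, conjTranspose_smul] using this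
  have key : (α (k + 1) + e • α k)ᴴ * (α (k + 1) + e • α k) = 0 := by
    rw [conjTranspose_add, conjTranspose_smul, add_mul, mul_add, mul_add,
      Matrix.smul_mul, Matrix.smul_mul, Matrix.mul_smul, Matrix.mul_smul,
      h3, h4]
    have h2k := h2 k
    have : (α k)ᴴ * α k = ((2 * ‖c‖ : ℝ) : ℂ) • 1
        - (α (k + 1))ᴴ * α (k + 1) := by
      rw [← h2k]; abel
    simp only [Complex.star_def]
    rw [smul_smul, smul_smul, smul_smul, hce, this]
    rw [hec, hcec]
    have : ((2 * ‖c‖ : ℝ) : ℂ) = 2 * (a : ℂ) ^ 2 := by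
      rw [Complex.ofReal_mul, habs]; norm_num
    rw [this]
    ext i j
    by_cases hij : i = j <;>
      simp [hij, Matrix.add_apply, Matrix.sub_apply, Matrix.smul_apply,
        Matrix.one_apply] <;> ring
  have hz : α (k + 1) + e • α k = 0 := by
    open scoped ComplexOrder in
    exact (Matrix.conjTranspose_mul_self_eq_zero).mp key
  have : α (k + 1) = -(e • α k) := by
    rw [eq_neg_iff_add_eq_zero]; exact hz
  rw [this, neg_smul]
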